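/- Dual generalized medial soundness: let A(x₁,…,xₙ) be a boolean function given by a formula built only from ∧ and ∨ in which each variable occurs exactly once. Then for all booleans b₁,…,bₙ,c₁,…,cₙ, A(b₁ ∧ c₁, …, bₙ ∧ cₙ) implies A(b₁,…,bₙ) ∧ A(c₁,…,cₙ). -/

import Mathlib

inductive MF (V : Type) : Type
  | leaf : V → MF V
  | and : MF V → MF V → MF V
  | or : MF V → MF V → MF V

def MF.eval {V : Type} (v : V → Bool) : MF V → Bool
  | .leaf x => v x
  | .and F G => F.eval v && G.eval v
  | .or F G => F.eval v || G.eval v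

/-- The list of variable occurrences of the formula. -/
def MF.vars {V : Type} : MF V → List V
  | .leaf x => [x]
  | .and F G => F.vars ++ G.vars
  | .or F G => F.vars ++ G.vars

/-- De Morgan dual: swap ∧ and ∨, keeping variables fixed. -/
def MF.dual {V : Type} : MF V → MF V
  | .leaf x => .leaf x
  | .and F G => .or F.dual G.dual
  | .or F G => .and F.dual G.dual

/-- Replace every connective by ∧. -/
def MF.allAnd {V : Type} : MF V → MF V
  | .leaf x => .leaf x
  | .and F G => .and F.allAnd G.allAnd
  | .or F G => .and F.allAnd G.allAnd

/-- Replace every connective by ∨. -/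
def MF.allOr {V : Type} : MF V → MF V
  | .leaf x => .leaf x
  | .and F G => .or F.allOr G.allOr
  | .or F G => .or F.allOr G.allOr

-- On `Bool`, `&&` and `||` are definitionally `⊓` and `⊔`.
theorem MF.monotone_eval {V : Type} (A : MF V) : Monotone fun v : V → Bool => A.eval v := by
  intro u v huv
  induction A with
  | leaf x => exact huv x
  | and F G ihF ihG => exact inf_le_inf ihF ihG
  | or F G ihF ihG => exact sup_le_sup ihF ihG

theorem dual_generalized_medial_sound_general {V : Type} (A : MF V)
    (b c : V → Bool) (h : A.eval (fun x => b x && c x) = true) :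
    (A.eval b && A.eval c) = true := by
  have hb : true ≤ A.eval b := h ▸ A.monotone_eval (inf_le_left : b ⊓ c ≤ b)
  have hc : true ≤ A.eval c := h ▸ A.monotone_eval (inf_le_right : b ⊓ c ≤ c)
  exact top_unique (le_inf hb hc)

theorem dual_generalized_medial_sound {V : Type} (A : MF V) (hlin : A.vars.Nodup)
    (b c : V → Bool) (h : A.eval (fun x => b x && c x) = true) :
    (A.eval b && A.eval c) = true :=
  dual_generalized_medial_sound_general A b c h
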